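/- arXiv:1801.10459 — 2 statements merged into one kernel-verified Lean document; each statement's English description precedes it below -/
import Mathlib

section
/- If policy π* performs at least as well as policy π in the sense that η(π*) ≥ η(π), then the expected discounted sum of advantages of π along trajectories from π* is nonnegative: E_{τ∼π*}[ Σ_{t=0}^∞ γ^t A^π(s_t, a_t) ] ≥ 0. -/
open scoped BigOperators

/-- A finite, infinite-horizon discounted MDP `(S, A, P, r, ρ0, γ)`. -/
structure MDP (S A : Type) [Fintype S] [Fintype A] where
  P : S → A → S → ℝ
  r : S → ℝ
  ρ0 : S → ℝ
  γ : ℝ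
  P_nonneg : ∀ s a s', 0 ≤ P s a s'
  P_sum : ∀ s a, ∑ s', P s a s' = 1
  ρ0_nonneg : ∀ s, 0 ≤ ρ0 s
  ρ0_sum : ∑ s, ρ0 s = 1
  γ_pos : 0 < γ
  γ_lt_one : γ < 1

variable {S A : Type} [Fintype S] [Fintype A] [DecidableEq S] [DecidableEq A]

/-- A stochastic policy: a probability distribution over actions at each state. -/
def IsPolicy (π : S → A → ℝ) : Prop :=
  (∀ s a, 0 ≤ π s a) ∧ ∀ s, ∑ a, π s a = 1

namespace MDP

/-- Distribution of the state `s_t` when `s_0 ∼ d` and actions are sampled from `π`. -/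
def stateDist (M : MDP S A) (π : S → A → ℝ) : ℕ → (S → ℝ) → S → ℝ
  | 0, d => d
  | t + 1, d => fun s' => ∑ s, ∑ a, M.stateDist π t d s * π s a * M.P s a s'

/-- Dirac distribution concentrated at a state. -/
def dirac (s : S) : S → ℝ := fun x => if x = s then 1 else 0

/-- Value function `V^π(s) = E[∑_t γ^t r(s_t) | s_0 = s]`. -/
noncomputable def V (M : MDP S A) (π : S → A → ℝ) (s : S) : ℝ :=
  ∑' t : ℕ, M.γ ^ t * ∑ s', M.stateDist π t (dirac s) s' * M.r s'

/-- State-action value `Q^π(s,a) = r(s) + γ E_{s'∼P(·|s,a)}[V^π(s')]`. -/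
noncomputable def Q (M : MDP S A) (π : S → A → ℝ) (s : S) (a : A) : ℝ :=
  M.r s + M.γ * ∑ s', M.P s a s' * M.V π s'

/-- Advantage function `A^π(s,a) = Q^π(s,a) − V^π(s)`. -/
noncomputable def Adv (M : MDP S A) (π : S → A → ℝ) (s : S) (a : A) : ℝ :=
  M.Q π s a - M.V π s

/-- Expected discounted return `η(π) = E_{s0∼ρ0}[V^π(s0)]`. -/
noncomputable def η (M : MDP S A) (π : S → A → ℝ) : ℝ :=
  ∑ s, M.ρ0 s * M.V π s

/-- `E_{τ∼π*}[∑_t γ^t A^π(s_t, a_t)]`: expected discounted advantage sum of `π`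
along trajectories generated by `π*` from `ρ0`. -/
noncomputable def advSum (M : MDP S A) (π πStar : S → A → ℝ) : ℝ :=
  ∑' t : ℕ, M.γ ^ t * ∑ s, ∑ a, M.stateDist πStar t M.ρ0 s * πStar s a * M.Adv π s a

end MDP

/-!
Performance difference: `advSum π π* = η(π*) − η(π)`. Writing `A^π = r + γ P V^π − V^π` and
averaging over the state distribution `d_t` of `π*` at time `t`, the `t`-th term of `advSum` is
`γ^t E_{d_t}[r] + (γ^{t+1} E_{d_{t+1}}[V^π] − γ^t E_{d_t}[V^π])`. The first parts sum to `η(π*)`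
and the brackets telescope to `−E_{ρ0}[V^π] = −η(π)`; all series converge geometrically because
the `d_t` are nonnegative with constant total mass.
-/

theorem HasSum.succ_sub {G : Type*} [AddCommGroup G] [TopologicalSpace G] [IsTopologicalAddGroup G]
    {f : ℕ → G} {a : G} (hf : HasSum f a) : HasSum (fun n => f (n + 1) - f n) (-f 0) := by
  have hshift : HasSum (fun n => f (n + 1)) (a - f 0) :=
    (hasSum_nat_add_iff 1).2 (by simpa using hf)
  simpa using hshift.sub hf

namespace MDP

omit [DecidableEq A]

section

omit [DecidableEq S]

variable (M : MDP S A) {π : S → A → ℝ}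

theorem stateDist_nonneg (hπ : ∀ s a, 0 ≤ π s a) {d : S → ℝ} (hd : ∀ s, 0 ≤ d s) (t : ℕ) (s : S) :
    0 ≤ M.stateDist π t d s := by
  induction t generalizing s with
  | zero => exact hd s
  | succ t ih =>
    exact Finset.sum_nonneg fun x _ => Finset.sum_nonneg fun a _ =>
      mul_nonneg (mul_nonneg (ih x) (hπ x a)) (M.P_nonneg x a s)

theorem sum_stateDist (hπ : ∀ s, ∑ a, π s a = 1) (d : S → ℝ) (t : ℕ) :
    ∑ s, M.stateDist π t d s = ∑ s, d s := by
  induction t with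
  | zero => rfl
  | succ t ih =>
    calc ∑ s', ∑ s, ∑ a, M.stateDist π t d s * π s a * M.P s a s'
        = ∑ s, ∑ a, M.stateDist π t d s * π s a * ∑ s', M.P s a s' := by
          rw [Finset.sum_comm]
          simp only [Finset.mul_sum]
          exact Finset.sum_congr rfl fun s _ => Finset.sum_comm
      _ = ∑ s, M.stateDist π t d s := by
          simp only [M.P_sum, mul_one, ← Finset.mul_sum, hπ]
      _ = ∑ s, d s := ih

theorem summable_pow_mul_sum_stateDist_mul (hπ : IsPolicy π) {d : S → ℝ} (hd : ∀ s, 0 ≤ d s)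
    (v : S → ℝ) : Summable fun t => M.γ ^ t * ∑ s, M.stateDist π t d s * v s := by
  have hγ : 0 ≤ M.γ := M.γ_pos.le
  refine Summable.of_norm_bounded
    ((summable_geometric_of_lt_one hγ M.γ_lt_one).mul_right ((∑ s, d s) * ∑ s, |v s|)) fun t => ?_
  have hmass : ∀ s, M.stateDist π t d s ≤ ∑ s, d s := fun s =>
    M.sum_stateDist hπ.2 d t ▸
      Finset.single_le_sum (fun x _ => M.stateDist_nonneg hπ.1 hd t x) (Finset.mem_univ s)
  rw [Real.norm_eq_abs, abs_mul, abs_pow, abs_of_nonneg hγ, Finset.mul_sum]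
  gcongr
  refine (Finset.abs_sum_le_sum_abs _ _).trans (Finset.sum_le_sum fun s _ => ?_)
  rw [abs_mul, abs_of_nonneg (M.stateDist_nonneg hπ.1 hd t s)]
  exact mul_le_mul_of_nonneg_right (hmass s) (abs_nonneg _)

end

variable (M : MDP S A)

theorem stateDist_eq_sum_dirac (π : S → A → ℝ) (d : S → ℝ) (t : ℕ) (s' : S) :
    M.stateDist π t d s' = ∑ s, d s * M.stateDist π t (dirac s) s' := by
  induction t generalizing s' with
  | zero => simp [stateDist, dirac]
  | succ t ih =>
    simp only [stateDist, ih, Finset.sum_mul, Finset.mul_sum, mul_assoc]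
    exact (Finset.sum_congr rfl fun _ _ => Finset.sum_comm).trans Finset.sum_comm

theorem sum_mul_V_eq_tsum {π : S → A → ℝ} (hπ : IsPolicy π) (d : S → ℝ) :
    ∑ s, d s * M.V π s = ∑' t, M.γ ^ t * ∑ s', M.stateDist π t d s' * M.r s' := by
  have hV : ∀ s, Summable fun t => M.γ ^ t * ∑ s', M.stateDist π t (dirac s) s' * M.r s' :=
    fun s => M.summable_pow_mul_sum_stateDist_mul hπ (fun x => by unfold dirac; split_ifs <;> norm_num) M.r
  simp only [V, ← tsum_mul_left]
  rw [← Summable.tsum_finsetSum fun s _ => (hV s).mul_left (d s)]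
  refine tsum_congr fun t => ?_
  simp only [M.stateDist_eq_sum_dirac π d t, Finset.sum_mul, Finset.mul_sum]
  rw [Finset.sum_comm]
  exact Finset.sum_congr rfl fun _ _ => Finset.sum_congr rfl fun _ _ => by ring

theorem sum_mul_Adv (π : S → A → ℝ) {π' : S → A → ℝ} (hπ' : ∀ s, ∑ a, π' s a = 1) (d : S → ℝ) :
    ∑ s, ∑ a, d s * π' s a * M.Adv π s a
      = ∑ s, d s * M.r s + M.γ * ∑ s, M.stateDist π' 1 d s * M.V π s - ∑ s, d s * M.V π s := by
  have hterm : ∀ s a, d s * π' s a * M.Adv π s a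
      = π' s a * (d s * (M.r s - M.V π s)) + M.γ * ∑ s', d s * π' s a * M.P s a s' * M.V π s' := by
    intro s a
    simp only [Adv, Q, mul_assoc, ← Finset.mul_sum]
    ring
  have hnext : ∑ s', M.stateDist π' 1 d s' * M.V π s'
      = ∑ s, ∑ a, ∑ s', d s * π' s a * M.P s a s' * M.V π s' := by
    simp only [stateDist, Finset.sum_mul]
    rw [Finset.sum_comm]
    exact Finset.sum_congr rfl fun _ _ => Finset.sum_comm
  simp only [hterm, Finset.sum_add_distrib, ← Finset.sum_mul, hπ', one_mul, ← Finset.mul_sum,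
    hnext, mul_sub, Finset.sum_sub_distrib]
  ring

theorem advSum_eq_η_sub_η (π : S → A → ℝ) {π' : S → A → ℝ} (hπ' : IsPolicy π') :
    M.advSum π π' = M.η π' - M.η π := by
  set g : ℕ → ℝ := fun t => M.γ ^ t * ∑ s, M.stateDist π' t M.ρ0 s * M.V π s
  have hterm : ∀ t, M.γ ^ t * ∑ s, ∑ a, M.stateDist π' t M.ρ0 s * π' s a * M.Adv π s a
      = M.γ ^ t * ∑ s, M.stateDist π' t M.ρ0 s * M.r s + (g (t + 1) - g t) := by
    intro t
    have hnext : M.stateDist π' (t + 1) M.ρ0 = M.stateDist π' 1 (M.stateDist π' t M.ρ0) := rfl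
    rw [M.sum_mul_Adv π hπ'.2]
    simp only [g, pow_succ, hnext]
    ring
  have hsum := (M.summable_pow_mul_sum_stateDist_mul hπ' M.ρ0_nonneg M.r).hasSum.add
    (M.summable_pow_mul_sum_stateDist_mul hπ' M.ρ0_nonneg (M.V π)).hasSum.succ_sub
  rw [advSum, tsum_congr hterm, hsum.tsum_eq, η, η, M.sum_mul_V_eq_tsum hπ']
  simp only [pow_zero, one_mul, stateDist, ← sub_eq_add_neg]

end MDP

theorem advSum_nonneg_of_performs_better_general (M : MDP S A) (π πStar : S → A → ℝ)
    (hπStar : IsPolicy πStar)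
    (h : M.η π ≤ M.η πStar) :
    0 ≤ M.advSum π πStar := by
  rw [M.advSum_eq_η_sub_η π hπStar]
  exact sub_nonneg.mpr h

/-- If `η(π*) ≥ η(π)` then the expected discounted advantage sum of `π`
along trajectories of `π*` is nonnegative. -/
theorem advSum_nonneg_of_performs_better (M : MDP S A) (π πStar : S → A → ℝ)
    (hπ : IsPolicy π) (hπStar : IsPolicy πStar)
    (h : M.η π ≤ M.η πStar) :
    0 ≤ M.advSum π πStar :=
  advSum_nonneg_of_performs_better_general M π πStar hπStar h
end

section
/- For any two policies π and π*, η(π*) − η(π) = Σ_{s∈S} d^{π*}(s) Σ_{a∈A} π*(a|s) A^π(s,a), where d^{π*}(s) = Σ_{t=0}^∞ γ^t Pr_{τ∼π*}(s_t = s) is the (unnormalized) discounted state visitation measure of π*. -/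
open scoped BigOperators

variable {S A : Type} [Fintype S] [Fintype A] [DecidableEq S] [DecidableEq A]

/-! The advantage `A^π(s, a) = r(s) + γ E_{s' ∼ P(·|s,a)} V^π(s') − V^π(s)` is the expected
temporal-difference error of `V^π`, and the argument works for any `f : S → ℝ` in place of `V^π`.
Averaged over the state distribution `d_t` of `π*` at time `t`, the TD error of `f` is
`E_{d_t} r + γ E_{d_{t+1}} f − E_{d_t} f`. Weighted by `γ^t` and summed over `t`, the `f`-terms
telescope to `−E_{ρ0} f` and the reward terms add up to `η(π*)`; for `f = V^π` the result is
`η(π*) − η(π)`. -/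

theorem tsum_add_sub_telescope {G : Type*} [AddCommGroup G] [TopologicalSpace G]
    [IsTopologicalAddGroup G] [T2Space G] {u x : ℕ → G} (hu : Summable u) (hx : Summable x) :
    ∑' t, (u t + x (t + 1) - x t) = ∑' t, u t - x 0 := by
  have hx' : Summable fun t => x (t + 1) := (summable_nat_add_iff 1).mpr hx
  rw [(hu.add hx').tsum_sub hx, hu.tsum_add hx', hx.tsum_eq_zero_add]
  abel

theorem summable_pow_mul_of_abs_le {γ C : ℝ} (hγ0 : 0 ≤ γ) (hγ1 : γ < 1) {c : ℕ → ℝ}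
    (hc : ∀ t, |c t| ≤ C) : Summable fun t => γ ^ t * c t := by
  refine ((summable_geometric_of_lt_one hγ0 hγ1).mul_right C).of_norm_bounded fun t => ?_
  rw [Real.norm_eq_abs, abs_mul, abs_pow, abs_of_nonneg hγ0]
  exact mul_le_mul_of_nonneg_left (hc t) (pow_nonneg hγ0 t)

namespace MDP

variable {S A : Type} [Fintype S] [Fintype A] (M : MDP S A) {π : S → A → ℝ}

/-- The paper's `d^π`, for an arbitrary initial distribution `d` in place of `ρ0`. -/
noncomputable def occupancy (π : S → A → ℝ) (d : S → ℝ) (s : S) : ℝ :=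
  ∑' t : ℕ, M.γ ^ t * M.stateDist π t d s

theorem sum_stateDist_mul_sum_P_mul (d f : S → ℝ) (t : ℕ) :
    ∑ s, M.stateDist π t d s * ∑ a, π s a * ∑ s', M.P s a s' * f s' =
      ∑ s', M.stateDist π (t + 1) d s' * f s' := by
  simp only [stateDist, Finset.mul_sum, Finset.sum_mul]
  conv_rhs => rw [Finset.sum_comm]
  refine Finset.sum_congr rfl fun s _ => ?_
  rw [Finset.sum_comm]
  exact Finset.sum_congr rfl fun s' _ => Finset.sum_congr rfl fun a _ => by ring

theorem stateDist_mem_stdSimplex (hπ : IsPolicy π) {d : S → ℝ} (hd : d ∈ stdSimplex ℝ S)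
    (t : ℕ) : M.stateDist π t d ∈ stdSimplex ℝ S := by
  induction t with
  | zero => exact hd
  | succ t ih =>
    refine ⟨fun s' => ?_, ?_⟩
    · exact Finset.sum_nonneg fun s _ => Finset.sum_nonneg fun a _ =>
        mul_nonneg (mul_nonneg (ih.1 s) (hπ.1 s a)) (M.P_nonneg s a s')
    · have := M.sum_stateDist_mul_sum_P_mul (π := π) d (fun _ => 1) t
      simp only [mul_one, M.P_sum, hπ.2] at this
      rw [← this, ih.2]

theorem summable_discounted_stateDist (hπ : IsPolicy π) {d : S → ℝ} (hd : d ∈ stdSimplex ℝ S)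
    (s : S) : Summable fun t => M.γ ^ t * M.stateDist π t d s :=
  summable_pow_mul_of_abs_le M.γ_pos.le M.γ_lt_one fun t => by
    obtain ⟨h0, h1⟩ := mem_Icc_of_mem_stdSimplex (M.stateDist_mem_stdSimplex hπ hd t) s
    rwa [abs_of_nonneg h0]

theorem summable_discounted_expectation (hπ : IsPolicy π) {d : S → ℝ}
    (hd : d ∈ stdSimplex ℝ S) (x : S → ℝ) :
    Summable fun t => M.γ ^ t * ∑ s, M.stateDist π t d s * x s := by
  simp only [Finset.mul_sum, ← mul_assoc]
  exact summable_sum fun s _ => (M.summable_discounted_stateDist hπ hd s).mul_right (x s)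

theorem sum_occupancy_mul (hπ : IsPolicy π) {d : S → ℝ} (hd : d ∈ stdSimplex ℝ S)
    (x : S → ℝ) :
    ∑ s, M.occupancy π d s * x s = ∑' t, M.γ ^ t * ∑ s, M.stateDist π t d s * x s := by
  simp only [occupancy, ← tsum_mul_right, Finset.mul_sum, ← mul_assoc]
  exact (Summable.tsum_finsetSum fun s _ =>
    (M.summable_discounted_stateDist hπ hd s).mul_right (x s)).symm

/-- The expected temporal-difference error of a value estimate `f`; `Adv π = tdError (V π)`. -/
def tdError (f : S → ℝ) (s : S) (a : A) : ℝ :=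
  M.r s + M.γ * ∑ s', M.P s a s' * f s' - f s

theorem sum_stateDist_mul_tdError (hπ : ∀ s, ∑ a, π s a = 1) (d f : S → ℝ) (t : ℕ) :
    ∑ s, M.stateDist π t d s * ∑ a, π s a * M.tdError f s a =
      ∑ s, M.stateDist π t d s * M.r s + M.γ * ∑ s, M.stateDist π (t + 1) d s * f s -
        ∑ s, M.stateDist π t d s * f s := by
  have hmean : ∀ s, ∑ a, π s a * M.tdError f s a =
      M.r s - f s + M.γ * ∑ a, π s a * ∑ s', M.P s a s' * f s' := fun s => by
    calc _ = ∑ a, (π s a * (M.r s - f s) + M.γ * (π s a * ∑ s', M.P s a s' * f s')) :=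
          Finset.sum_congr rfl fun a _ => by rw [tdError]; ring
      _ = _ := by rw [Finset.sum_add_distrib, ← Finset.sum_mul, ← Finset.mul_sum, hπ, one_mul]
  rw [← M.sum_stateDist_mul_sum_P_mul, Finset.mul_sum, ← Finset.sum_add_distrib,
    ← Finset.sum_sub_distrib]
  exact Finset.sum_congr rfl fun s _ => by rw [hmean]; ring

variable [DecidableEq S]

theorem dirac_mem_stdSimplex (s : S) : dirac s ∈ stdSimplex ℝ S := by
  convert single_mem_stdSimplex ℝ s using 1
  ext x
  simp [dirac, Pi.single_apply]

theorem stateDist_eq_sum_mul_stateDist_dirac (d : S → ℝ) (t : ℕ) (s' : S) :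
    M.stateDist π t d s' = ∑ s, d s * M.stateDist π t (dirac s) s' := by
  induction t generalizing s' with
  | zero => simp [stateDist, dirac]
  | succ t ih =>
    simp only [stateDist, ih, Finset.sum_mul, Finset.mul_sum]
    refine (Finset.sum_congr rfl fun s'' _ => Finset.sum_comm).trans ?_
    rw [Finset.sum_comm]
    exact Finset.sum_congr rfl fun s _ => Finset.sum_congr rfl fun s'' _ =>
      Finset.sum_congr rfl fun a _ => by ring

theorem sum_mul_V (hπ : IsPolicy π) (d : S → ℝ) :
    ∑ s, d s * M.V π s = ∑' t, M.γ ^ t * ∑ s', M.stateDist π t d s' * M.r s' := by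
  simp only [V, ← tsum_mul_left]
  rw [← Summable.tsum_finsetSum fun s _ =>
    (M.summable_discounted_expectation hπ (dirac_mem_stdSimplex s) M.r).mul_left (d s)]
  refine tsum_congr fun t => ?_
  simp only [M.stateDist_eq_sum_mul_stateDist_dirac d t, Finset.sum_mul, Finset.mul_sum]
  rw [Finset.sum_comm]
  exact Finset.sum_congr rfl fun s _ => Finset.sum_congr rfl fun s' _ => by ring

theorem performance_difference_tdError (hπ : IsPolicy π) (f : S → ℝ) :
    M.η π - ∑ s, M.ρ0 s * f s =
      ∑ s, M.occupancy π M.ρ0 s * ∑ a, π s a * M.tdError f s a := by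
  have hρ0 : M.ρ0 ∈ stdSimplex ℝ S := ⟨M.ρ0_nonneg, M.ρ0_sum⟩
  rw [M.sum_occupancy_mul hπ hρ0, η, M.sum_mul_V hπ]
  calc _ = ∑' t, M.γ ^ t * ∑ s, M.stateDist π t M.ρ0 s * M.r s
        - M.γ ^ 0 * ∑ s, M.stateDist π 0 M.ρ0 s * f s := by simp [stateDist]
    _ = ∑' t, (M.γ ^ t * ∑ s, M.stateDist π t M.ρ0 s * M.r s
        + M.γ ^ (t + 1) * ∑ s, M.stateDist π (t + 1) M.ρ0 s * f s
        - M.γ ^ t * ∑ s, M.stateDist π t M.ρ0 s * f s) :=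
      (tsum_add_sub_telescope (M.summable_discounted_expectation hπ hρ0 M.r)
        (M.summable_discounted_expectation hπ hρ0 f)).symm
    _ = _ := tsum_congr fun t => by rw [M.sum_stateDist_mul_tdError hπ.2]; ring

end MDP

theorem performance_difference_occupancy_general (M : MDP S A) (π πStar : S → A → ℝ)
    (hπStar : IsPolicy πStar) :
    M.η πStar - M.η π =
      ∑ s, (∑' t : ℕ, M.γ ^ t * M.stateDist πStar t M.ρ0 s) *
        ∑ a, πStar s a * M.Adv π s a :=
  M.performance_difference_tdError hπStar (M.V π)

/-- Performance difference in terms of the discounted state visitation measure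
`d^{π*}(s) = ∑_t γ^t Pr_{τ∼π*}(s_t = s)`. -/
theorem performance_difference_occupancy (M : MDP S A) (π πStar : S → A → ℝ)
    (hπ : IsPolicy π) (hπStar : IsPolicy πStar) :
    M.η πStar - M.η π =
      ∑ s, (∑' t : ℕ, M.γ ^ t * M.stateDist πStar t M.ρ0 s) *
        ∑ a, πStar s a * M.Adv π s a :=
  performance_difference_occupancy_general M π πStar hπStar
end
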